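/- Being rank-1 homotopic is an equivalence relation on 1-paths in M: every 1-path is rank-1 homotopic to itself; if a 1-path γ is rank-1 homotopic to γ' then γ' is rank-1 homotopic to γ; and if γ is rank-1 homotopic to γ' and γ' is rank-1 homotopic to γ'', then γ is rank-1 homotopic to γ''. -/

import Mathlib

open scoped Manifold

variable (E : Type*) [NormedAddCommGroup E] [NormedSpace ℝ E] [FiniteDimensional ℝ E]
variable {M : Type*} [TopologicalSpace M] [ChartedSpace E M]
  [IsManifold 𝓘(ℝ, E) (⊤ : ℕ∞) M]

/-- A 1-path in `M`: a smooth map `ℝ → M` that is constant near `(-∞, 0]` and near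
`[1, ∞)` (in the sense of the `ε`-conditions). -/
def IsOnePath (γ : ℝ → M) : Prop :=
  ContMDiff 𝓘(ℝ, ℝ) 𝓘(ℝ, E) (⊤ : ℕ∞) γ ∧
    ∃ ε > (0 : ℝ), (∀ t ≤ ε, γ t = γ 0) ∧ (∀ t, 1 - ε ≤ t → γ t = γ 1)

/-- A 2-path in `M`, as a smooth map `ℝ × ℝ → M` with coordinates `(s, t)`,
constant near the boundary in each variable, whose images at `t = 0` and `t = 1`
are single points. -/
def IsTwoPath (g : ℝ × ℝ → M) : Prop :=
  ContMDiff 𝓘(ℝ, ℝ × ℝ) 𝓘(ℝ, E) (⊤ : ℕ∞) g ∧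
    (∃ ε > (0 : ℝ),
      (∀ s t, s ≤ ε → g (s, t) = g (0, t)) ∧
      (∀ s t, 1 - ε ≤ s → g (s, t) = g (1, t)) ∧
      (∀ s t, t ≤ ε → g (s, t) = g (s, 0)) ∧
      (∀ s t, 1 - ε ≤ t → g (s, t) = g (s, 1))) ∧
    (∀ s s', g (s, 0) = g (s', 0)) ∧ (∀ s s', g (s, 1) = g (s', 1))

/-- A rank-1 homotopy: a 2-path whose differential has rank at most 1 at every point. -/
def IsRank1Homotopy (h : ℝ × ℝ → M) : Prop :=
  IsTwoPath E h ∧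
    ∀ p : ℝ × ℝ,
      Module.finrank ℝ
        (LinearMap.range (mfderiv 𝓘(ℝ, ℝ × ℝ) 𝓘(ℝ, E) h p).toLinearMap) ≤ 1

/-- Two 1-paths are rank-1 homotopic if they are joined by a rank-1 homotopy. -/
def Rank1Homotopic (γ γ' : ℝ → M) : Prop :=
  ∃ h : ℝ × ℝ → M, IsRank1Homotopy E h ∧ (∀ t, h (0, t) = γ t) ∧ (∀ t, h (1, t) = γ' t)

/-!
Reflexivity is witnessed by the constant homotopy `(s, t) ↦ γ t`, symmetry by reversing `s`, and
transitivity by running the two homotopies one after the other in `s`. Smoothness and rank at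
most one survive precomposition with smooth maps by the chain rule, and both are local. The
collars of the two homotopies make the concatenation agree, near every point, with a
reparametrisation of one of them, so it is again smooth of rank at most one.
-/

section Concat

variable {X : Type*}

noncomputable def homotopyConcat (h₁ h₂ : ℝ × ℝ → X) (p : ℝ × ℝ) : X :=
  if p.1 ≤ 1 / 2 then h₁ (2 * p.1, p.2) else h₂ (2 * p.1 - 1, p.2)

variable {h₁ h₂ : ℝ × ℝ → X}

@[simp]
theorem homotopyConcat_zero (t : ℝ) : homotopyConcat h₁ h₂ (0, t) = h₁ (0, t) := by
  norm_num [homotopyConcat]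

@[simp]
theorem homotopyConcat_one (t : ℝ) : homotopyConcat h₁ h₂ (1, t) = h₂ (1, t) := by
  norm_num [homotopyConcat]

theorem homotopyConcat_eq_left {ε : ℝ}
    (h₁_right : ∀ s t, 1 - ε ≤ s → h₁ (s, t) = h₁ (1, t))
    (h₂_left : ∀ s t, s ≤ ε → h₂ (s, t) = h₂ (0, t)) (h₁₂ : ∀ t, h₁ (1, t) = h₂ (0, t))
    {p : ℝ × ℝ} (hp : p.1 < 1 / 2 + ε / 2) :
    homotopyConcat h₁ h₂ p = h₁ (2 * p.1, p.2) := by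
  unfold homotopyConcat
  split_ifs with hp'
  · rfl
  · rw [h₂_left _ _ (by linarith), ← h₁₂, h₁_right (2 * p.1) _ (by linarith)]

theorem homotopyConcat_eq_right {ε : ℝ}
    (h₁_right : ∀ s t, 1 - ε ≤ s → h₁ (s, t) = h₁ (1, t))
    (h₂_left : ∀ s t, s ≤ ε → h₂ (s, t) = h₂ (0, t)) (h₁₂ : ∀ t, h₁ (1, t) = h₂ (0, t))
    {p : ℝ × ℝ} (hp : 1 / 2 - ε / 2 < p.1) :
    homotopyConcat h₁ h₂ p = h₂ (2 * p.1 - 1, p.2) := by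
  unfold homotopyConcat
  split_ifs with hp'
  · rw [h₁_right _ _ (by linarith), h₁₂, h₂_left (2 * p.1 - 1) _ (by linarith)]
  · rfl

theorem homotopyConcat_eq_of_const {t : ℝ} (h₁_const : ∀ s s', h₁ (s, t) = h₁ (s', t))
    (h₂_const : ∀ s s', h₂ (s, t) = h₂ (s', t)) (h₁₂ : h₁ (1, t) = h₂ (0, t)) (s s' : ℝ) :
    homotopyConcat h₁ h₂ (s, t) = homotopyConcat h₁ h₂ (s', t) := by
  have h_eq : ∀ s, homotopyConcat h₁ h₂ (s, t) = h₁ (1, t) := by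
    intro s
    unfold homotopyConcat
    split_ifs
    · exact h₁_const _ _
    · rw [h₁₂]; exact h₂_const _ _
  rw [h_eq, h_eq]

end Concat

section

variable {E : Type*} [NormedAddCommGroup E] [NormedSpace ℝ E]
  {M : Type*} [TopologicalSpace M] [ChartedSpace E M]

section RankLeOne

variable {F : Type*} [NormedAddCommGroup F] [NormedSpace ℝ F]
  {G : Type*} [NormedAddCommGroup G] [NormedSpace ℝ G]

instance [FiniteDimensional ℝ E] (x : M) : FiniteDimensional ℝ (TangentSpace 𝓘(ℝ, E) x) :=
  ‹FiniteDimensional ℝ E›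

variable (E) in
def IsSmoothRankLeOne (h : F → M) : Prop :=
  ContMDiff 𝓘(ℝ, F) 𝓘(ℝ, E) (⊤ : ℕ∞) h ∧
    ∀ p, Module.finrank ℝ (LinearMap.range (mfderiv 𝓘(ℝ, F) 𝓘(ℝ, E) h p).toLinearMap) ≤ 1

theorem isSmoothRankLeOne_of_contMDiff {γ : ℝ → M}
    (hγ : ContMDiff 𝓘(ℝ, ℝ) 𝓘(ℝ, E) (⊤ : ℕ∞) γ) : IsSmoothRankLeOne E γ :=
  ⟨hγ, fun _ => (LinearMap.finrank_range_le _).trans_eq (Module.finrank_self ℝ)⟩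

theorem IsSmoothRankLeOne.comp [FiniteDimensional ℝ E] {h : F → M} (hh : IsSmoothRankLeOne E h)
    {f : G → F} (hf : ContDiff ℝ (⊤ : ℕ∞) f) : IsSmoothRankLeOne E (h ∘ f) := by
  have hf' : ContMDiff 𝓘(ℝ, G) 𝓘(ℝ, F) (⊤ : ℕ∞) f := contMDiff_iff_contDiff.mpr hf
  refine ⟨hh.1.comp hf', fun p => ?_⟩
  rw [mfderiv_comp p (hh.1.mdifferentiableAt (by simp)) (hf'.mdifferentiableAt (by simp)),
    ContinuousLinearMap.toLinearMap_comp]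
  exact le_trans (Submodule.finrank_mono (LinearMap.range_comp_le_range _ _)) (hh.2 (f p))

theorem IsSmoothRankLeOne.of_forall_eventuallyEq {g : F → M}
    (hg : ∀ p, ∃ h : F → M, IsSmoothRankLeOne E h ∧ g =ᶠ[nhds p] h) : IsSmoothRankLeOne E g := by
  refine ⟨fun p => ?_, fun p => ?_⟩ <;> obtain ⟨h, hh, hgh⟩ := hg p
  · exact (hh.1 p).congr_of_eventuallyEq hgh
  · rw [hgh.mfderiv_eq]
    exact hh.2 p

end RankLeOne

theorem IsRank1Homotopy.isSmoothRankLeOne {h : ℝ × ℝ → M} (hh : IsRank1Homotopy E h) :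
    IsSmoothRankLeOne E h :=
  ⟨hh.1.1, hh.2⟩

theorem IsOnePath.isRank1Homotopy_comp_snd [FiniteDimensional ℝ E] {γ : ℝ → M}
    (hγ : IsOnePath E γ) : IsRank1Homotopy E (γ ∘ Prod.snd) := by
  obtain ⟨hsm, ε, hε, h0, h1⟩ := hγ
  have hr := (isSmoothRankLeOne_of_contMDiff hsm).comp (G := ℝ × ℝ) contDiff_snd
  exact ⟨⟨hr.1, ⟨ε, hε, fun _ _ _ => rfl, fun _ _ _ => rfl, fun _ t ht => h0 t ht,
    fun _ t ht => h1 t ht⟩, fun _ _ => rfl, fun _ _ => rfl⟩, hr.2⟩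

theorem IsRank1Homotopy.reverse [FiniteDimensional ℝ E] {h : ℝ × ℝ → M}
    (hh : IsRank1Homotopy E h) : IsRank1Homotopy E (fun p => h (1 - p.1, p.2)) := by
  have hσ : ContDiff ℝ (⊤ : ℕ∞) fun p : ℝ × ℝ => (1 - p.1, p.2) := by fun_prop
  have hr := hh.isSmoothRankLeOne.comp hσ
  obtain ⟨⟨-, ⟨ε, hε, c₀, c₁, c₀', c₁'⟩, e₀, e₁⟩, -⟩ := hh
  refine ⟨⟨hr.1, ⟨ε, hε, fun s t hs => ?_, fun s t hs => ?_, fun s t ht => c₀' _ _ ht,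
    fun s t ht => c₁' _ _ ht⟩, fun _ _ => e₀ _ _, fun _ _ => e₁ _ _⟩, hr.2⟩
  · simpa only [sub_zero] using c₁ _ t (by linarith)
  · simpa only [sub_self] using c₀ _ t (by linarith)

theorem IsSmoothRankLeOne.homotopyConcat [FiniteDimensional ℝ E] {h₁ h₂ : ℝ × ℝ → M}
    (hh₁ : IsSmoothRankLeOne E h₁) (hh₂ : IsSmoothRankLeOne E h₂) {ε : ℝ} (hε : 0 < ε)
    (h₁_right : ∀ s t, 1 - ε ≤ s → h₁ (s, t) = h₁ (1, t))
    (h₂_left : ∀ s t, s ≤ ε → h₂ (s, t) = h₂ (0, t)) (h₁₂ : ∀ t, h₁ (1, t) = h₂ (0, t)) :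
    IsSmoothRankLeOne E (homotopyConcat h₁ h₂) := by
  have hL₁ : ContDiff ℝ (⊤ : ℕ∞) fun p : ℝ × ℝ => (2 * p.1, p.2) := by fun_prop
  have hL₂ : ContDiff ℝ (⊤ : ℕ∞) fun p : ℝ × ℝ => (2 * p.1 - 1, p.2) := by fun_prop
  refine IsSmoothRankLeOne.of_forall_eventuallyEq fun p => ?_
  by_cases hp : p.1 < 1 / 2 + ε / 2
  · refine ⟨_, hh₁.comp hL₁, Filter.eventuallyEq_of_mem
      ((isOpen_lt continuous_fst continuous_const).mem_nhds hp) fun q hq => ?_⟩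
    exact homotopyConcat_eq_left h₁_right h₂_left h₁₂ hq
  · have hp' : 1 / 2 - ε / 2 < p.1 := by linarith [not_lt.mp hp]
    refine ⟨_, hh₂.comp hL₂, Filter.eventuallyEq_of_mem
      ((isOpen_lt continuous_const continuous_fst).mem_nhds hp') fun q hq => ?_⟩
    exact homotopyConcat_eq_right h₁_right h₂_left h₁₂ hq

theorem IsRank1Homotopy.homotopyConcat [FiniteDimensional ℝ E] {h₁ h₂ : ℝ × ℝ → M}
    (hh₁ : IsRank1Homotopy E h₁) (hh₂ : IsRank1Homotopy E h₂)
    (h₁₂ : ∀ t, h₁ (1, t) = h₂ (0, t)) : IsRank1Homotopy E (homotopyConcat h₁ h₂) := by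
  have hr₁ := hh₁.isSmoothRankLeOne
  have hr₂ := hh₂.isSmoothRankLeOne
  obtain ⟨⟨-, ⟨ε₁, hε₁, a₀, a₁, a₀', a₁'⟩, e₁₀, e₁₁⟩, -⟩ := hh₁
  obtain ⟨⟨-, ⟨ε₂, hε₂, b₀, b₁, b₀', b₁'⟩, e₂₀, e₂₁⟩, -⟩ := hh₂
  have hr := hr₁.homotopyConcat hr₂ (lt_min hε₁ hε₂)
    (fun s t hs => a₁ s t (by linarith [min_le_left ε₁ ε₂]))
    (fun s t hs => b₀ s t (by linarith [min_le_right ε₁ ε₂])) h₁₂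
  set ε := min (min ε₁ ε₂) 1 / 4
  have hε : 0 < ε := by positivity
  have hε₁ : ε ≤ ε₁ / 4 := by grind
  have hε₂ : ε ≤ ε₂ / 4 := by grind
  have hε' : ε ≤ 1 / 4 := by grind
  refine ⟨⟨hr.1, ⟨ε, hε, fun s t hs => ?_, fun s t hs => ?_, fun s t ht => ?_, fun s t ht => ?_⟩,
    homotopyConcat_eq_of_const e₁₀ e₂₀ (h₁₂ 0), homotopyConcat_eq_of_const e₁₁ e₂₁ (h₁₂ 1)⟩, hr.2⟩
  · rw [homotopyConcat_zero, _root_.homotopyConcat, if_pos (by linarith)]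
    exact a₀ _ _ (by linarith)
  · rw [homotopyConcat_one, _root_.homotopyConcat, if_neg (by linarith)]
    exact b₁ _ _ (by linarith)
  · unfold _root_.homotopyConcat
    split_ifs
    exacts [a₀' _ _ (by linarith), b₀' _ _ (by linarith)]
  · unfold _root_.homotopyConcat
    split_ifs
    exacts [a₁' _ _ (by linarith), b₁' _ _ (by linarith)]

namespace Rank1Homotopic

variable [FiniteDimensional ℝ E]

theorem refl {γ : ℝ → M} (hγ : IsOnePath E γ) : Rank1Homotopic E γ γ :=
  ⟨_, hγ.isRank1Homotopy_comp_snd, fun _ => rfl, fun _ => rfl⟩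

theorem symm {γ γ' : ℝ → M} (h : Rank1Homotopic E γ γ') : Rank1Homotopic E γ' γ := by
  obtain ⟨h, hh, h₀, h₁⟩ := h
  exact ⟨_, hh.reverse, fun t => by simpa using h₁ t, fun t => by simpa using h₀ t⟩

theorem trans {γ γ' γ'' : ℝ → M} (h : Rank1Homotopic E γ γ') (h' : Rank1Homotopic E γ' γ'') :
    Rank1Homotopic E γ γ'' := by
  obtain ⟨h, hh, h₀, h₁⟩ := h
  obtain ⟨h', hh', h₀', h₁'⟩ := h'
  exact ⟨_, hh.homotopyConcat hh' fun t => (h₁ t).trans (h₀' t).symm,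
    fun t => by simpa using h₀ t, fun t => by simpa using h₁' t⟩

end Rank1Homotopic

end

theorem rank1Homotopic_isEquivalence :
    (∀ γ : ℝ → M, IsOnePath E γ → Rank1Homotopic E γ γ) ∧
    (∀ γ γ' : ℝ → M, IsOnePath E γ → IsOnePath E γ' →
      Rank1Homotopic E γ γ' → Rank1Homotopic E γ' γ) ∧
    (∀ γ γ' γ'' : ℝ → M, IsOnePath E γ → IsOnePath E γ' → IsOnePath E γ'' →
      Rank1Homotopic E γ γ' → Rank1Homotopic E γ' γ'' → Rank1Homotopic E γ γ'') :=
  ⟨fun _ hγ => .refl hγ, fun _ _ _ _ h => h.symm, fun _ _ _ _ _ _ h h' => h.trans h'⟩
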